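/- arXiv:1511.01383 — 2 statements merged into one kernel-verified Lean document; each statement's English description precedes it below -/
import Mathlib

section
/- Fix m, k ∈ ℕ. For every set U, every relation W ⊆ U×U, every valuation of the variables x_0,…,x_{m−1} into subsets of W, and every pair (r,s) ∈ W, there is exactly one normal form τ ∈ F_k^m such that (r,s) belongs to the relativized interpretation ⟦τ⟧. -/
/-- Relation-type terms over `m` variables. -/
inductive RTerm (m : ℕ) : Type
  | var : Fin m → RTerm m
  | zero : RTerm m
  | one : RTerm m
  | id : RTerm m
  | add : RTerm m → RTerm m → RTerm m
  | mul : RTerm m → RTerm m → RTerm m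
  | neg : RTerm m → RTerm m
  | comp : RTerm m → RTerm m → RTerm m
  | conv : RTerm m → RTerm m
  deriving DecidableEq

/-- The diversity term `0′ = 1 · −1′`. -/
def RTerm.div {m : ℕ} : RTerm m := .mul .one (.neg .id)

/-- The list `D_m = {1′, x_0, …, x_{m−1}}`. -/
def listD (m : ℕ) : List (RTerm m) :=
  RTerm.id :: List.ofFn (fun i : Fin m => RTerm.var i)

/-- Signed product `Y^α`, where the sign of `x ∈ Y` is positive iff `x ∈ S`
(the empty product is `1`). -/
def sprodBy {m : ℕ} (Y S : List (RTerm m)) : RTerm m :=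
  (Y.map (fun x => if x ∈ S then x else RTerm.neg x)).foldr RTerm.mul RTerm.one

/-- The one-step closure `CY = {x;y : x,y ∈ Y} ∪ {x˘ : x ∈ Y}`. -/
def listC {m : ℕ} (Y : List (RTerm m)) : List (RTerm m) :=
  (Y.flatMap fun x => Y.map fun y => RTerm.comp x y) ++ Y.map RTerm.conv

/-- The normal forms `F_n^m`: `F_0^m = {D_m^β}`,
`F_{n+1}^m = {D_m^β · (C F_n^m)^α}`. -/
def forms (m : ℕ) : ℕ → List (RTerm m)
  | 0 => (listD m).sublists.map (sprodBy (listD m))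
  | n + 1 =>
      (listD m).sublists.flatMap fun S =>
        (listC (forms m n)).sublists.map fun T =>
          RTerm.mul (sprodBy (listD m) S) (sprodBy (listC (forms m n)) T)

/-- A Boolean algebra with operators of relation type: a Boolean algebra with a
distinguished identity element, a binary composition and a unary converse that
are normal and additive in each argument. -/
structure RelBAO (B : Type*) [BooleanAlgebra B] where
  rid : B
  comp : B → B → B
  conv : B → B
  comp_bot_left : ∀ x, comp ⊥ x = ⊥
  comp_bot_right : ∀ x, comp x ⊥ = ⊥
  comp_sup_left : ∀ x y z, comp (x ⊔ y) z = comp x z ⊔ comp y z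
  comp_sup_right : ∀ x y z, comp x (y ⊔ z) = comp x y ⊔ comp x z
  conv_bot : conv ⊥ = ⊥
  conv_sup : ∀ x y, conv (x ⊔ y) = conv x ⊔ conv y

/-- Evaluation of a relation-type term in a Boolean algebra with operators. -/
def beval {B : Type*} [BooleanAlgebra B] (A : RelBAO B) {m : ℕ} (v : Fin m → B) :
    RTerm m → B
  | .var i => v i
  | .zero => ⊥
  | .one => ⊤
  | .id => A.rid
  | .add a b => beval A v a ⊔ beval A v b
  | .mul a b => beval A v a ⊓ beval A v b
  | .neg a => (beval A v a)ᶜ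
  | .comp a b => A.comp (beval A v a) (beval A v b)
  | .conv a => A.conv (beval A v a)

/-- Relativized interpretation of relation-type terms inside a unit `W ⊆ U × U`. -/
def rint {U : Type*} (W : Set (U × U)) {m : ℕ} (v : Fin m → Set (U × U)) :
    RTerm m → Set (U × U)
  | .var i => v i
  | .zero => ∅
  | .one => W
  | .id => {p | p ∈ W ∧ p.1 = p.2}
  | .add a b => rint W v a ∪ rint W v b
  | .mul a b => rint W v a ∩ rint W v b
  | .neg a => W \ rint W v a
  | .comp a b => {p | p ∈ W ∧ ∃ c, (p.1, c) ∈ rint W v a ∧ (c, p.2) ∈ rint W v b}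
  | .conv a => {p | p ∈ W ∧ (p.2, p.1) ∈ rint W v a}

/-- The two relation properties `R` (reflexive) and `S` (symmetric). -/
inductive RS | R | S
  deriving DecidableEq

/-- `W` is an `H`-relation: reflexive on its base if `R ∈ H`,
symmetric if `S ∈ H`. -/
def IsHRel (H : Set RS) {U : Type*} (W : Set (U × U)) : Prop :=
  (RS.R ∈ H → ∀ a b : U, (a, b) ∈ W → (a, a) ∈ W ∧ (b, b) ∈ W) ∧
  (RS.S ∈ H → ∀ a b : U, (a, b) ∈ W → (b, a) ∈ W)

/-- The equation `τ = σ` is `RRA_H`-valid. -/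
def Valid (H : Set RS) {m : ℕ} (τ σ : RTerm m) : Prop :=
  ∀ (U : Type) (W : Set (U × U)) (v : Fin m → Set (U × U)),
    IsHRel H W → (∀ i, v i ⊆ W) → rint W v τ = rint W v σ

/-- `[σ]` is an atom of the free algebra `Fr_m(RRA_H)`. -/
def IsAtomT (H : Set RS) {m : ℕ} (σ : RTerm m) : Prop :=
  ¬ Valid H σ .zero ∧
    ∀ ρ : RTerm m, Valid H (σ.mul ρ) .zero ∨ Valid H (σ.mul (.neg ρ)) .zero

/-- `e1 = 1′·−(0′;0′)`. -/
def termE1 {m : ℕ} : RTerm m := .mul .id (.neg (.comp .div .div))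
/-- `e2 = 1′·(0′;0′)`. -/
def termE2 {m : ℕ} : RTerm m := .mul .id (.comp .div .div)
/-- `m2 = 0′·−(0′;0′)`. -/
def termM2 {m : ℕ} : RTerm m := .mul .div (.neg (.comp .div .div))
/-- `m3 = 0′·(0′;0′)`. -/
def termM3 {m : ℕ} : RTerm m := .mul .div (.comp .div .div)
/-- `t = 0′·0′˘·((0′·0′˘);(0′·0′˘))`. -/
def termT {m : ℕ} : RTerm m :=
  .mul (.mul .div (.conv .div)) (.comp (.mul .div (.conv .div)) (.mul .div (.conv .div)))

/-! A point `p ∈ W` lies in `Y^α` exactly when `α` records which members of `Y` contain `p`,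
so exactly one signed product over `Y` contains it. Every normal form is a signed product over
`D_m`, or the product of one over `D_m` and one over `C F_n^m`, and a product of two terms
contains `p` iff both factors do. -/

section UniqueType

variable {U : Type*} {W : Set (U × U)} {m : ℕ} {v : Fin m → Set (U × U)} {p : U × U}

theorem mem_rint_sprodBy (hp : p ∈ W) (S : List (RTerm m)) :
    ∀ Y : List (RTerm m), p ∈ rint W v (sprodBy Y S) ↔ ∀ y ∈ Y, (p ∈ rint W v y ↔ y ∈ S)
  | [] => by simpa [sprodBy, rint]
  | y :: Y => by
    have hy : p ∈ rint W v (if y ∈ S then y else .neg y) ↔ (p ∈ rint W v y ↔ y ∈ S) := by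
      split_ifs with h <;> simp [rint, hp, h]
    change p ∈ rint W v (.mul _ (sprodBy Y S)) ↔ _
    rw [rint, Set.mem_inter_iff, hy, mem_rint_sprodBy hp S Y, List.forall_mem_cons]

theorem sprodBy_congr {Y S T : List (RTerm m)} (h : ∀ y ∈ Y, (y ∈ S ↔ y ∈ T)) :
    sprodBy Y S = sprodBy Y T := by
  unfold sprodBy
  congr 1
  exact List.map_congr_left fun y hy => by simp only [h y hy]

/-- The signed products `Y^α`, one for each sign pattern `α`. -/
def signedProducts (Y : List (RTerm m)) : List (RTerm m) :=
  Y.sublists.map (sprodBy Y)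

open Classical in
theorem mem_rint_sprodBy_iff_eq (hp : p ∈ W) (Y S : List (RTerm m)) :
    p ∈ rint W v (sprodBy Y S) ↔ sprodBy Y S = sprodBy Y (Y.filter (p ∈ rint W v ·)) := by
  have hself : p ∈ rint W v (sprodBy Y (Y.filter (p ∈ rint W v ·))) :=
    (mem_rint_sprodBy hp _ Y).2 fun y hy => by simp [hy]
  refine ⟨fun hS => sprodBy_congr fun y hy => ?_, fun h => h ▸ hself⟩
  rw [← (mem_rint_sprodBy hp S Y).1 hS y hy]
  simp [hy]

theorem existsUnique_mem_signedProducts (hp : p ∈ W) (Y : List (RTerm m)) :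
    ∃! τ, τ ∈ signedProducts Y ∧ p ∈ rint W v τ := by
  classical
  refine ⟨sprodBy Y (Y.filter (p ∈ rint W v ·)), ⟨?_, ?_⟩, ?_⟩
  · exact List.mem_map_of_mem (List.mem_sublists.2 List.filter_sublist)
  · exact (mem_rint_sprodBy_iff_eq hp Y _).2 rfl
  · rintro _ ⟨hτ, hpτ⟩
    obtain ⟨S, -, rfl⟩ := List.mem_map.1 hτ
    exact (mem_rint_sprodBy_iff_eq hp Y S).1 hpτ

theorem existsUnique_mem_rint_mul {P Q : RTerm m → Prop}
    (hP : ∃! a, P a ∧ p ∈ rint W v a) (hQ : ∃! b, Q b ∧ p ∈ rint W v b) :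
    ∃! τ, (∃ a, P a ∧ ∃ b, Q b ∧ τ = .mul a b) ∧ p ∈ rint W v τ := by
  obtain ⟨a, ha, ha_uniq⟩ := hP
  obtain ⟨b, hb, hb_uniq⟩ := hQ
  refine ⟨.mul a b, ⟨⟨a, ha.1, b, hb.1, rfl⟩, ha.2, hb.2⟩, ?_⟩
  rintro _ ⟨⟨a', ha', b', hb', rfl⟩, hpa', hpb'⟩
  rw [ha_uniq a' ⟨ha', hpa'⟩, hb_uniq b' ⟨hb', hpb'⟩]

end UniqueType

theorem mem_forms_succ {m n : ℕ} {τ : RTerm m} :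
    τ ∈ forms m (n + 1) ↔ ∃ a, a ∈ signedProducts (listD m) ∧
      ∃ b, b ∈ signedProducts (listC (forms m n)) ∧ τ = .mul a b := by
  simp only [forms, signedProducts, List.mem_flatMap, List.mem_map, eq_comm (b := τ)]
  aesop

theorem stmt_4_general (m k : ℕ) (U : Type) (W : Set (U × U)) (v : Fin m → Set (U × U))
    (r s : U) (hrs : (r, s) ∈ W) :
    ∃! τ : RTerm m, τ ∈ forms m k ∧ (r, s) ∈ rint W v τ := by
  cases k with
  | zero => exact existsUnique_mem_signedProducts hrs (listD m)
  | succ n =>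
    simpa only [mem_forms_succ] using existsUnique_mem_rint_mul
      (existsUnique_mem_signedProducts hrs (listD m))
      (existsUnique_mem_signedProducts hrs (listC (forms m n)))

/-- every pair `(r,s)` in the unit `W` satisfies exactly one
normal form of degree `k` under the relativized interpretation. -/
theorem stmt_4 (m k : ℕ) (U : Type) (W : Set (U × U)) (v : Fin m → Set (U × U))
    (hv : ∀ i, v i ⊆ W) (r s : U) (hrs : (r, s) ∈ W) :
    ∃! τ : RTerm m, τ ∈ forms m k ∧ (r, s) ∈ rint W v τ :=
  stmt_4_general m k U W v r s hrs
end

section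
/- Let m ∈ ℕ and H ⊆ {R,S}, and suppose m ≠ 0 or H ≠ {R,S}. Then the m-generated free algebra Fr_m(RRA_H) is not atomic: there exists a relation-type term τ over m variables such that τ = 0 is not RRA_H-valid and no atom of Fr_m(RRA_H) lies below [τ]. -/
/-!
Suppose `σ ≤ t` is nonzero, realized at `(x, y)`; then `x`, `y` lie on a triangle of diversity
edges. Cover the unit by levels, `U × ℕ`, relating points of equal or adjacent levels. The
projection is a bounded morphism, so `σ` holds at the copy of `(x, y)` on level `0`, and it keeps
holding if the cover is altered only from a level `D > depth σ` on, because a term of depth `n`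
looks at most `n` levels up. Two such alterations are told apart by a term `ρ`, so `σ·ρ` and
`σ·−ρ` are both nonzero. Adding every pair above `D` creates a region where `0′;0′` (and `1;1′`)
hold along all walks, and climbing around the triangle reaches it. Removing instead the diversity
pairs inside levels `≥ D` (when `R ∈ H`, so that loops lead up there) or the loops above `D`
(allowed when `R ∉ H`) makes every walk through `0′;0′`-pairs (resp. `1;1′·0′;0′`-pairs) die
within `2D + 1` steps, since a level potential must grow at each step.
-/

namespace RTerm

variable {m : ℕ}

def depth : RTerm m → ℕ
  | .var _ | .zero | .one | .id => 0
  | .add a b | .mul a b => max a.depth b.depth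
  | .neg a => a.depth
  | .comp a b => max a.depth b.depth + 1
  | .conv a => a.depth + 1

def divdiv : RTerm m := .comp .div .div

def targetLoop : RTerm m := .comp .one .id

/-- `t` holds after every `Step`. -/
def allNext (t : RTerm m) : RTerm m :=
  .mul (.neg (.comp (.mul .one (.neg t)) .one))
    (.mul (.neg (.comp .one (.mul .one (.neg t)))) (.neg (.conv (.mul .one (.neg t)))))

def alwaysFor (b : RTerm m) : ℕ → RTerm m
  | 0 => b
  | s + 1 => .mul b (allNext (alwaysFor b s))

end RTerm

open RTerm

section Semantics

variable {m : ℕ} {P : Type*} {X : Set (P × P)} {v : Fin m → Set (P × P)}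

theorem rint_subset (hv : ∀ i, v i ⊆ X) : ∀ t : RTerm m, rint X v t ⊆ X
  | .var i => hv i
  | .zero => Set.empty_subset _
  | .one => subset_rfl
  | .id | .comp _ _ | .conv _ => fun _ hp => hp.1
  | .add a b => Set.union_subset (rint_subset hv a) (rint_subset hv b)
  | .mul a _ => Set.inter_subset_left.trans (rint_subset hv a)
  | .neg _ => Set.sdiff_subset

theorem mem_rint_div {p : P × P} : p ∈ rint X v .div ↔ p ∈ X ∧ p.1 ≠ p.2 := by
  simp only [RTerm.div, rint, Set.mem_inter_iff, Set.mem_sdiff, Set.mem_ofPred_eq]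
  tauto

theorem mem_rint_divdiv {p : P × P} : p ∈ rint X v divdiv ↔
    p ∈ X ∧ ∃ c, ((p.1, c) ∈ X ∧ p.1 ≠ c) ∧ ((c, p.2) ∈ X ∧ c ≠ p.2) := by
  simp only [divdiv, rint, Set.mem_ofPred_eq, mem_rint_div]

theorem mem_rint_targetLoop {p : P × P} :
    p ∈ rint X v targetLoop ↔ p ∈ X ∧ (p.2, p.2) ∈ X := by
  simp only [targetLoop, rint, Set.mem_ofPred_eq]
  constructor
  · rintro ⟨hp, c, -, hc, rfl⟩
    exact ⟨hp, hc⟩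
  · rintro ⟨hp, hl⟩
    exact ⟨hp, p.2, hp, hl, rfl⟩

def Step (X : Set (P × P)) (p q : P × P) : Prop :=
  (q.1 = p.1 ∧ (q.2, p.2) ∈ X) ∨ ((p.1, q.1) ∈ X ∧ q.2 = p.2) ∨ q = p.swap

theorem Step.mono {Y : Set (P × P)} {p q : P × P} (h : Step X p q) (hXY : X ⊆ Y) :
    Step Y p q := by
  rcases h with ⟨h1, h2⟩ | ⟨h1, h2⟩ | h
  exacts [Or.inl ⟨h1, hXY h2⟩, Or.inr (Or.inl ⟨hXY h1, h2⟩), Or.inr (Or.inr h)]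

theorem mem_rint_allNext {t : RTerm m} {p : P × P} :
    p ∈ rint X v (allNext t) ↔ p ∈ X ∧ ∀ q ∈ X, Step X p q → q ∈ rint X v t := by
  simp only [allNext, rint, Set.mem_inter_iff, Set.mem_sdiff, Set.mem_ofPred_eq, Step]
  constructor
  · rintro ⟨⟨hp, h1⟩, ⟨-, h2⟩, -, h3⟩
    refine ⟨hp, ?_⟩
    rintro q hq (⟨hq1, hc⟩ | ⟨hc, hq2⟩ | rfl) <;> by_contra ht
    · exact h1 ⟨hp, q.2, ⟨hq1 ▸ hq, hq1 ▸ hq, hq1 ▸ ht⟩, hc⟩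
    · exact h2 ⟨hp, q.1, hc, hq2 ▸ hq, hq2 ▸ hq, hq2 ▸ ht⟩
    · exact h3 ⟨hp, hq, hq, ht⟩
  · rintro ⟨hp, h⟩
    refine ⟨⟨hp, ?_⟩, ⟨hp, ?_⟩, hp, ?_⟩
    · rintro ⟨-, c, ⟨hq, -, ht⟩, hc⟩
      exact ht (h _ hq (Or.inl ⟨rfl, hc⟩))
    · rintro ⟨-, c, hc, hq, -, ht⟩
      exact ht (h _ hq (Or.inr (Or.inl ⟨hc, rfl⟩)))
    · rintro ⟨-, hq, -, ht⟩
      exact ht (h _ hq (Or.inr (Or.inr rfl)))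

variable {b : RTerm m}

theorem mem_of_mem_rint_alwaysFor {p : P × P} :
    ∀ {s}, p ∈ rint X v (alwaysFor b s) → p ∈ rint X v b
  | 0, h => h
  | _ + 1, h => h.1

theorem mem_rint_alwaysFor_of_step {s : ℕ} {p q : P × P}
    (hp : p ∈ rint X v (alwaysFor b (s + 1))) (hq : q ∈ X) (hpq : Step X p q) :
    q ∈ rint X v (alwaysFor b s) :=
  (mem_rint_allNext.1 hp.2).2 q hq hpq

theorem subset_rint_alwaysFor (hb : X ⊆ rint X v b) : ∀ s, X ⊆ rint X v (alwaysFor b s)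
  | 0 => hb
  | s + 1 => fun _ hp =>
    ⟨hb hp, mem_rint_allNext.2 ⟨hp, fun _ hq _ => subset_rint_alwaysFor hb s hq⟩⟩

theorem mem_rint_alwaysFor_of_walk {γ : ℕ → P × P} (hγ : ∀ k, γ k ∈ X)
    (hstep : ∀ k, Step X (γ k) (γ (k + 1))) :
    ∀ k s, γ 0 ∈ rint X v (alwaysFor b (k + s)) → γ k ∈ rint X v (alwaysFor b s)
  | 0, s, h => by rwa [Nat.zero_add] at h
  | k + 1, s, h => by
    rw [Nat.add_right_comm] at h
    exact mem_rint_alwaysFor_of_step (mem_rint_alwaysFor_of_walk hγ hstep k (s + 1) h)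
      (hγ _) (hstep k)

theorem rint_alwaysFor_eq_empty (φ : P × P → ℕ) {B : ℕ}
    (hB : ∀ p ∈ rint X v b, φ p ≤ B)
    (hφ : ∀ p ∈ rint X v b, ∃ q ∈ X, Step X p q ∧ (q ∈ rint X v b → φ p < φ q)) :
    rint X v (alwaysFor b (B + 1)) = ∅ := by
  have key : ∀ s, ∀ p ∈ rint X v (alwaysFor b s), φ p + s ≤ B := by
    intro s
    induction s with
    | zero => exact hB
    | succ s ih =>
      intro p hp
      obtain ⟨q, hq, hpq, hlt⟩ := hφ p (mem_of_mem_rint_alwaysFor hp)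
      have hqs := mem_rint_alwaysFor_of_step hp hq hpq
      have := hlt (mem_of_mem_rint_alwaysFor hqs)
      have := ih q hqs
      omega
  exact Set.eq_empty_of_forall_notMem fun p hp => by have := key _ p hp; omega

end Semantics

section Grid

variable {m : ℕ} {U : Type*} {W : Set (U × U)} {v : Fin m → Set (U × U)}

def Shaped (p : (U × ℕ) × (U × ℕ)) : Prop :=
  p.1.2 ≤ p.2.2 + 1 ∧ p.2.2 ≤ p.1.2 + 1 ∧ (p.1.1 = p.2.1 → p.1.2 = p.2.2)

def gridUnit (W : Set (U × U)) : Set ((U × ℕ) × (U × ℕ)) :=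
  {p | Shaped p ∧ (p.1.1, p.2.1) ∈ W}

def gridVal (W : Set (U × U)) (v : Fin m → Set (U × U)) (i : Fin m) :
    Set ((U × ℕ) × (U × ℕ)) :=
  {p | p ∈ gridUnit W ∧ (p.1.1, p.2.1) ∈ v i}

theorem Shaped.levels {u w : U} {i j : ℕ} (h : Shaped ((u, i), (w, j))) :
    i ≤ j + 1 ∧ j ≤ i + 1 :=
  ⟨h.1, h.2.1⟩

theorem Shaped.swap {p : (U × ℕ) × (U × ℕ)} (h : Shaped p) : Shaped p.swap :=
  ⟨h.2.1, h.1, fun he => (h.2.2 he.symm).symm⟩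

theorem shaped_self (q : U × ℕ) : Shaped (q, q) := ⟨Nat.le_succ _, Nat.le_succ _, fun _ => rfl⟩

theorem shaped_of_ne {u e : U} {i k : ℕ} (hue : u ≠ e) (hik : i ≤ k + 1) (hki : k ≤ i + 1) :
    Shaped ((u, i), (e, k)) :=
  ⟨hik, hki, fun h => absurd h hue⟩

theorem Shaped.fst_ne {u e : U} {i k : ℕ} (h : Shaped ((u, i), (e, k)))
    (hne : ((u, i) : U × ℕ) ≠ (e, k)) : u ≠ e := by
  rintro rfl
  exact hne (Prod.ext rfl (h.2.2 rfl))

theorem exists_shaped_lift {u w : U} {i j : ℕ} (hp : Shaped ((u, i), (w, j))) (e : U) :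
    ∃ k, Shaped ((u, i), (e, k)) ∧ Shaped ((e, k), (w, j)) := by
  by_cases heu : e = u
  · subst heu
    exact ⟨i, shaped_self _, hp⟩
  by_cases hew : e = w
  · subst hew
    exact ⟨j, hp, shaped_self _⟩
  obtain ⟨_, _⟩ := hp.levels
  exact ⟨max i j, shaped_of_ne (Ne.symm heu) (by omega) (by omega),
    shaped_of_ne hew (by omega) (by omega)⟩

theorem mem_rint_gridUnit_iff (hv : ∀ i, v i ⊆ W) :
    ∀ (t : RTerm m) {p : (U × ℕ) × (U × ℕ)}, Shaped p →
      (p ∈ rint (gridUnit W) (gridVal W v) t ↔ (p.1.1, p.2.1) ∈ rint W v t)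
  | .var i, _, hp => ⟨fun h => h.2, fun h => ⟨⟨hp, hv i h⟩, h⟩⟩
  | .zero, _, _ => Iff.rfl
  | .one, _, hp => ⟨fun h => h.2, fun h => ⟨hp, h⟩⟩
  | .id, _, hp => ⟨fun h => ⟨h.1.2, congrArg Prod.fst h.2⟩,
      fun h => ⟨⟨hp, h.1⟩, Prod.ext h.2 (hp.2.2 h.2)⟩⟩
  | .add a b, _, hp => or_congr (mem_rint_gridUnit_iff hv a hp) (mem_rint_gridUnit_iff hv b hp)
  | .mul a b, _, hp =>
    and_congr (mem_rint_gridUnit_iff hv a hp) (mem_rint_gridUnit_iff hv b hp)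
  | .neg a, _, hp => ⟨fun h => ⟨h.1.2, fun h' => h.2 ((mem_rint_gridUnit_iff hv a hp).2 h')⟩,
      fun h => ⟨⟨hp, h.1⟩, fun h' => h.2 ((mem_rint_gridUnit_iff hv a hp).1 h')⟩⟩
  | .conv a, _, hp =>
    and_congr ⟨fun h => h.2, fun h => ⟨hp, h⟩⟩ (mem_rint_gridUnit_iff hv a hp.swap)
  | .comp a b, ⟨(u, i), (w, j)⟩, hp => by
    constructor
    · rintro ⟨⟨-, hW⟩, c, hca, hcb⟩
      have hsa := (rint_subset (fun _ _ h => h.1) a hca).1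
      have hsb := (rint_subset (fun _ _ h => h.1) b hcb).1
      exact ⟨hW, c.1, (mem_rint_gridUnit_iff hv a hsa).1 hca,
        (mem_rint_gridUnit_iff hv b hsb).1 hcb⟩
    · rintro ⟨hW, e, hea, heb⟩
      obtain ⟨k, hsa, hsb⟩ := exists_shaped_lift hp e
      exact ⟨⟨hp, hW⟩, (e, k), (mem_rint_gridUnit_iff hv a hsa).2 hea,
        (mem_rint_gridUnit_iff hv b hsb).2 heb⟩

end Grid

section Locality

variable {m : ℕ} {α : Type*} (g : α → ℕ) {X Y : Set (α × α)} {vX vY : Fin m → Set (α × α)}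

/-- A term of depth `n` at a pair of level `ℓ` only inspects pairs of level `≤ ℓ + n`. -/
theorem mem_rint_iff_of_agree_below {D : ℕ}
    (hX : ∀ p ∈ X, g p.2 ≤ g p.1 + 1) (hY : ∀ p ∈ Y, g p.2 ≤ g p.1 + 1)
    (hvX : ∀ i, vX i ⊆ X) (hvY : ∀ i, vY i ⊆ Y)
    (hXY : ∀ p, max (g p.1) (g p.2) < D → (p ∈ X ↔ p ∈ Y))
    (hv : ∀ i p, max (g p.1) (g p.2) < D → (p ∈ vX i ↔ p ∈ vY i)) :
    ∀ (t : RTerm m) (p : α × α), max (g p.1) (g p.2) + t.depth < D →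
      (p ∈ rint X vX t ↔ p ∈ rint Y vY t)
  | .var i, p, hd => hv i p (by omega)
  | .zero, _, _ => Iff.rfl
  | .one, p, hd => hXY p (by omega)
  | .id, p, hd => and_congr_left' (hXY p (by omega))
  | .add a b, p, hd => by
    simp only [depth] at hd
    exact or_congr (mem_rint_iff_of_agree_below hX hY hvX hvY hXY hv a p (by omega))
      (mem_rint_iff_of_agree_below hX hY hvX hvY hXY hv b p (by omega))
  | .mul a b, p, hd => by
    simp only [depth] at hd
    exact and_congr (mem_rint_iff_of_agree_below hX hY hvX hvY hXY hv a p (by omega))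
      (mem_rint_iff_of_agree_below hX hY hvX hvY hXY hv b p (by omega))
  | .neg a, p, hd => by
    simp only [depth] at hd
    exact and_congr (hXY p (by omega))
      (not_congr (mem_rint_iff_of_agree_below hX hY hvX hvY hXY hv a p hd))
  | .conv a, p, hd => by
    simp only [depth] at hd
    have hd' : max (g p.2) (g p.1) + a.depth < D := by omega
    exact and_congr (hXY p (by omega))
      (mem_rint_iff_of_agree_below hX hY hvX hvY hXY hv a p.swap hd')
  | .comp a b, p, hd => by
    simp only [depth] at hd
    have legs : ∀ c, g c ≤ g p.1 + 1 →
        ((p.1, c) ∈ rint X vX a ↔ (p.1, c) ∈ rint Y vY a) ∧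
          ((c, p.2) ∈ rint X vX b ↔ (c, p.2) ∈ rint Y vY b) := fun c hc =>
      ⟨mem_rint_iff_of_agree_below hX hY hvX hvY hXY hv a _ (by simp only; omega),
        mem_rint_iff_of_agree_below hX hY hvX hvY hXY hv b _ (by simp only; omega)⟩
    simp only [rint, Set.mem_ofPred_eq, hXY p (by omega)]
    constructor
    · rintro ⟨hp, c, ha, hb⟩
      have hc := hX _ (rint_subset hvX a ha)
      exact ⟨hp, c, (legs c hc).1.1 ha, (legs c hc).2.1 hb⟩
    · rintro ⟨hp, c, ha, hb⟩
      have hc := hY _ (rint_subset hvY a ha)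
      exact ⟨hp, c, (legs c hc).1.2 ha, (legs c hc).2.2 hb⟩

end Locality

section Subunits

variable {m : ℕ} {U : Type*} {W : Set (U × U)} {D : ℕ}

theorem mem_rint_of_agree_gridUnit {X : Set ((U × ℕ) × (U × ℕ))} (hX : ∀ p ∈ X, Shaped p)
    (hXW : ∀ p : (U × ℕ) × (U × ℕ), max p.1.2 p.2.2 < D → (p ∈ X ↔ p ∈ gridUnit W))
    {v : Fin m → Set (U × U)} (hv : ∀ i, v i ⊆ W) {σ : RTerm m} (hσ : σ.depth < D) {x y : U}
    (h : (x, y) ∈ rint W v σ) :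
    ((x, 0), (y, 0)) ∈ rint X (fun i => gridVal W v i ∩ X) σ := by
  have hroot : ((x, 0), (y, 0)) ∈ rint (gridUnit W) (gridVal W v) σ :=
    (mem_rint_gridUnit_iff hv σ ⟨Nat.zero_le _, Nat.zero_le _, fun _ => rfl⟩).2 h
  refine (mem_rint_iff_of_agree_below Prod.snd (fun p hp => (hX p hp).2.1)
    (fun p hp => hp.1.2.1) (fun _ => Set.inter_subset_right) (fun _ _ hp => hp.1) hXW
    (fun _ p hp => ⟨fun h => h.1, fun h => ⟨h, (hXW p hp).2 h.1⟩⟩) σ _ ?_).2 hroot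
  simpa using hσ

theorem exists_of_mem_rint_divdiv {X : Set ((U × ℕ) × (U × ℕ))} (hX : X ⊆ gridUnit W)
    {v : Fin m → Set ((U × ℕ) × (U × ℕ))} {u w : U} {i j : ℕ}
    (h : ((u, i), (w, j)) ∈ rint X v divdiv) :
    ∃ e, e ≠ u ∧ e ≠ w ∧ (u, e) ∈ W ∧ (e, w) ∈ W := by
  obtain ⟨-, ⟨e, k⟩, ⟨h1, hne1⟩, ⟨h2, hne2⟩⟩ := mem_rint_divdiv.1 h
  exact ⟨e, fun he => (hX h1).1.fst_ne hne1 he.symm, (hX h2).1.fst_ne hne2,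
    (hX h1).2, (hX h2).2⟩

theorem Step.min_le {X : Set ((U × ℕ) × (U × ℕ))} (hX : ∀ p ∈ X, Shaped p)
    {p q : (U × ℕ) × (U × ℕ)} (h : Step X p q) : min p.1.2 p.2.2 ≤ min q.1.2 q.2.2 + 1 := by
  rcases h with ⟨h1, h2⟩ | ⟨h1, h2⟩ | rfl
  · have : p.2.2 ≤ q.2.2 + 1 := (hX _ h2).2.1
    rw [h1]
    omega
  · have : p.1.2 ≤ q.1.2 + 1 := (hX _ h1).1
    rw [h2]
    omega
  · simp only [Prod.fst_swap, Prod.snd_swap]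
    omega

end Subunits

section DropFlat

variable {m : ℕ} {U : Type*} {W : Set (U × U)} {v : Fin m → Set ((U × ℕ) × (U × ℕ))} {D : ℕ}

def gridDropFlat (W : Set (U × U)) (D : ℕ) : Set ((U × ℕ) × (U × ℕ)) :=
  gridUnit W \ {p | p.1.2 = p.2.2 ∧ D ≤ p.1.2 ∧ p.1.1 ≠ p.2.1}

theorem gridDropFlat_subset : gridDropFlat W D ⊆ gridUnit W := Set.sdiff_subset

theorem mem_gridDropFlat_iff_of_lt {p : (U × ℕ) × (U × ℕ)} (hp : max p.1.2 p.2.2 < D) :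
    p ∈ gridDropFlat W D ↔ p ∈ gridUnit W :=
  ⟨fun h => h.1, fun h => ⟨h, fun h' => by have := h'.2.1; omega⟩⟩

theorem mem_gridDropFlat {u e : U} {i k : ℕ} (hne : u ≠ e) (hW : (u, e) ∈ W)
    (hik : i ≤ k + 1) (hki : k ≤ i + 1) (hD : i = k → i < D) :
    ((u, i), (e, k)) ∈ gridDropFlat W D := by
  refine ⟨⟨shaped_of_ne hne hik hki, hW⟩, ?_⟩
  rintro ⟨hik', hDi, -⟩
  have := hD hik'
  simp only at hDi
  omega

theorem self_mem_gridDropFlat {u : U} {i : ℕ} (hW : (u, u) ∈ W) :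
    ((u, i), (u, i)) ∈ gridDropFlat W D :=
  ⟨⟨shaped_self _, hW⟩, fun h => h.2.2 rfl⟩

/-- Any middle point of a pair between two levels `≥ D` lies on one of them. -/
theorem notMem_rint_divdiv_gridDropFlat {u w : U} {i j : ℕ} (hi : D ≤ i) (hj : D ≤ j)
    (hij : i ≠ j) : ((u, i), (w, j)) ∉ rint (gridDropFlat W D) v divdiv := by
  intro h
  obtain ⟨hp, ⟨e, k⟩, ⟨h1, hne1⟩, ⟨h2, hne2⟩⟩ := mem_rint_divdiv.1 h
  obtain ⟨_, _⟩ := hp.1.1.levels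
  obtain ⟨_, _⟩ := h1.1.1.levels
  obtain ⟨_, _⟩ := h2.1.1.levels
  obtain rfl | rfl : k = i ∨ k = j := by omega
  · exact h1.2 ⟨rfl, hi, h1.1.1.fst_ne hne1⟩
  · exact h2.2 ⟨rfl, hj, h2.1.1.fst_ne hne2⟩

/-- Out of a `0′;0′` pair one can always climb: the level sum `i + j` grows, until a pair
reaches level `D`, where a loop (by reflexivity) leads into the dead region above `D`. -/
theorem exists_step_gridDropFlat (hW : ∀ a b, (a, b) ∈ W → (a, a) ∈ W ∧ (b, b) ∈ W)
    {p : (U × ℕ) × (U × ℕ)} (hp : p ∈ rint (gridDropFlat W D) v divdiv) :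
    ∃ q ∈ gridDropFlat W D, Step (gridDropFlat W D) p q ∧
      (q ∈ rint (gridDropFlat W D) v divdiv →
        min (p.1.2 + p.2.2) (2 * D) < min (q.1.2 + q.2.2) (2 * D)) := by
  obtain ⟨⟨u, i⟩, ⟨w, j⟩⟩ := p
  obtain ⟨e, heu, hew, hue, hew'⟩ := exists_of_mem_rint_divdiv gridDropFlat_subset hp
  have hpX := (mem_rint_divdiv.1 hp).1
  obtain ⟨_, _⟩ := hpX.1.1.levels
  obtain rfl | hlt | hgt : i = j ∨ i < j ∨ j < i := by omega
  · refine ⟨((u, i), (e, i + 1)), mem_gridDropFlat heu.symm hue (by omega) (by omega) (by omega),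
      Or.inl ⟨rfl, mem_gridDropFlat hew hew' (by omega) (by omega) (by omega)⟩, fun hq => ?_⟩
    by_cases hiD : i < D
    · simp only
      omega
    · exact absurd hq (notMem_rint_divdiv_gridDropFlat (by omega) (by omega) (by omega))
  · obtain hjD | rfl | hDj : j < D ∨ j = D ∨ D < j := by omega
    · refine ⟨((e, j), (w, j)), mem_gridDropFlat hew hew' (by omega) (by omega) (fun _ => hjD),
        Or.inr (Or.inl ⟨mem_gridDropFlat heu.symm hue (by omega) (by omega) (by omega), rfl⟩),
        fun _ => by simp only; omega⟩
    · exact ⟨((w, j), (w, j)), self_mem_gridDropFlat (hW u w hpX.1.2).2,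
        Or.inr (Or.inl ⟨hpX, rfl⟩), fun _ => by simp only; omega⟩
    · exact absurd hp (notMem_rint_divdiv_gridDropFlat (by omega) (by omega) (by omega))
  · obtain hiD | rfl | hDi : i < D ∨ i = D ∨ D < i := by omega
    · refine ⟨((u, i), (e, i)), mem_gridDropFlat heu.symm hue (by omega) (by omega) (fun _ => hiD),
        Or.inl ⟨rfl, mem_gridDropFlat hew hew' (by omega) (by omega) (by omega)⟩,
        fun _ => by simp only; omega⟩
    · exact ⟨((u, i), (u, i)), self_mem_gridDropFlat (hW u w hpX.1.2).1,
        Or.inl ⟨rfl, hpX⟩, fun _ => by simp only; omega⟩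
    · exact absurd hp (notMem_rint_divdiv_gridDropFlat (by omega) (by omega) (by omega))

theorem rint_alwaysFor_divdiv_gridDropFlat (hW : ∀ a b, (a, b) ∈ W → (a, a) ∈ W ∧ (b, b) ∈ W) :
    rint (gridDropFlat W D) v (alwaysFor divdiv (2 * D + 1)) = ∅ :=
  rint_alwaysFor_eq_empty (fun p => min (p.1.2 + p.2.2) (2 * D)) (fun _ _ => min_le_right _ _)
    fun _ hp => exists_step_gridDropFlat hW hp

end DropFlat

section DropLoops

variable {m : ℕ} {U : Type*} {W : Set (U × U)} {v : Fin m → Set ((U × ℕ) × (U × ℕ))} {D : ℕ}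

def gridDropLoops (W : Set (U × U)) (D : ℕ) : Set ((U × ℕ) × (U × ℕ)) :=
  gridUnit W \ {p | p.1 = p.2 ∧ D ≤ p.1.2}

theorem gridDropLoops_subset : gridDropLoops W D ⊆ gridUnit W := Set.sdiff_subset

theorem mem_gridDropLoops_iff_of_lt {p : (U × ℕ) × (U × ℕ)} (hp : max p.1.2 p.2.2 < D) :
    p ∈ gridDropLoops W D ↔ p ∈ gridUnit W :=
  ⟨fun h => h.1, fun h => ⟨h, fun h' => by have := h'.2; omega⟩⟩

theorem mem_gridDropLoops {u e : U} {i k : ℕ} (hne : u ≠ e) (hW : (u, e) ∈ W)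
    (hik : i ≤ k + 1) (hki : k ≤ i + 1) : ((u, i), (e, k)) ∈ gridDropLoops W D :=
  ⟨⟨shaped_of_ne hne hik hki, hW⟩, fun h => hne (congrArg Prod.fst h.1)⟩

theorem exists_step_gridDropLoops {p : (U × ℕ) × (U × ℕ)}
    (hp : p ∈ rint (gridDropLoops W D) v (.mul targetLoop divdiv)) :
    ∃ q ∈ gridDropLoops W D, Step (gridDropLoops W D) p q ∧
      (q ∈ rint (gridDropLoops W D) v (.mul targetLoop divdiv) →
        p.2.2 + min p.1.2 p.2.2 < q.2.2 + min q.1.2 q.2.2) := by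
  obtain ⟨⟨u, i⟩, ⟨w, j⟩⟩ := p
  obtain ⟨e, heu, hew, hue, hew'⟩ := exists_of_mem_rint_divdiv gridDropLoops_subset hp.2
  obtain ⟨hpX, -⟩ := mem_rint_targetLoop.1 hp.1
  obtain ⟨_, _⟩ := hpX.1.1.levels
  by_cases hle : j ≤ i
  · exact ⟨((u, i), (e, j + 1)), mem_gridDropLoops heu.symm hue (by omega) (by omega),
      Or.inl ⟨rfl, mem_gridDropLoops hew hew' (by omega) (by omega)⟩, fun _ => by simp only; omega⟩
  · exact ⟨((e, j), (w, j)), mem_gridDropLoops hew hew' (by omega) (by omega),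
      Or.inr (Or.inl ⟨mem_gridDropLoops heu.symm hue (by omega) (by omega), rfl⟩),
      fun _ => by simp only; omega⟩

theorem rint_alwaysFor_targetLoop_divdiv_gridDropLoops :
    rint (gridDropLoops W D) v (alwaysFor (.mul targetLoop divdiv) (2 * D + 1)) = ∅ := by
  refine rint_alwaysFor_eq_empty (fun p => p.2.2 + min p.1.2 p.2.2) (fun p hp => ?_)
    fun _ hp => exists_step_gridDropLoops hp
  have hjD : p.2.2 < D := not_le.1 fun h => (mem_rint_targetLoop.1 hp.1).2.2 ⟨rfl, h⟩
  omega

end DropLoops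

section Fill

variable {m : ℕ} {U : Type*} {W : Set (U × U)} {v : Fin m → Set ((U × ℕ) × (U × ℕ))} {D : ℕ}

def gridFill (W : Set (U × U)) (D : ℕ) : Set ((U × ℕ) × (U × ℕ)) :=
  gridUnit W ∪ {p | Shaped p ∧ D ≤ min p.1.2 p.2.2}

theorem Shaped.of_mem_gridFill {p : (U × ℕ) × (U × ℕ)} (h : p ∈ gridFill W D) : Shaped p :=
  h.elim (·.1) (·.1)

theorem mem_gridFill_iff_of_lt {p : (U × ℕ) × (U × ℕ)} (hp : max p.1.2 p.2.2 < D) :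
    p ∈ gridFill W D ↔ p ∈ gridUnit W :=
  ⟨fun h => h.elim id fun h => by have := h.2; omega, Or.inl⟩

theorem mem_rint_alwaysFor_gridFill {b : RTerm m}
    (hb : ∀ p, Shaped p → D ≤ min p.1.2 p.2.2 → p ∈ rint (gridFill W D) v b) :
    ∀ s p, Shaped p → D + s ≤ min p.1.2 p.2.2 → p ∈ rint (gridFill W D) v (alwaysFor b s)
  | 0, p, hp, hD => hb p hp hD
  | s + 1, p, hp, hD => ⟨hb p hp (by omega), mem_rint_allNext.2 ⟨Or.inr ⟨hp, by omega⟩,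
      fun q hq hpq => mem_rint_alwaysFor_gridFill hb s q (Shaped.of_mem_gridFill hq)
        (by have := hpq.min_le fun _ => Shaped.of_mem_gridFill; omega)⟩⟩

theorem mem_rint_divdiv_gridFill (h3 : ∀ u w : U, ∃ e, e ≠ u ∧ e ≠ w)
    {p : (U × ℕ) × (U × ℕ)} (hp : Shaped p) (hD : D ≤ min p.1.2 p.2.2) :
    p ∈ rint (gridFill W D) v divdiv := by
  obtain ⟨⟨u, i⟩, ⟨w, j⟩⟩ := p
  obtain ⟨e, heu, hew⟩ := h3 u w
  obtain ⟨_, _⟩ := hp.levels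
  have hD' : D ≤ min i j := hD
  exact mem_rint_divdiv.2 ⟨Or.inr ⟨hp, hD⟩, (e, min i j + 1),
    ⟨Or.inr ⟨shaped_of_ne heu.symm (by omega) (by omega), by simp only; omega⟩,
      fun h => heu (congrArg Prod.fst h).symm⟩,
    ⟨Or.inr ⟨shaped_of_ne hew (by omega) (by omega), by simp only; omega⟩,
      fun h => hew (congrArg Prod.fst h)⟩⟩

theorem mem_rint_targetLoop_gridFill {p : (U × ℕ) × (U × ℕ)} (hp : Shaped p)
    (hD : D ≤ min p.1.2 p.2.2) : p ∈ rint (gridFill W D) v targetLoop :=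
  mem_rint_targetLoop.2 ⟨Or.inr ⟨hp, hD⟩, Or.inr ⟨shaped_self _, by simp only [min_self]; omega⟩⟩

end Fill

section Triangle

variable {m : ℕ} {U : Type*} {W : Set (U × U)} {v : Fin m → Set (U × U)} {t : ZMod 3 → U}

def IsTriangle (W : Set (U × U)) (t : ZMod 3 → U) : Prop :=
  ∀ a b, a ≠ b → t a ≠ t b ∧ (t a, t b) ∈ W

theorem mem_rint_termT {x y : U} : (x, y) ∈ rint W v termT ↔
    ((x, y) ∈ W ∧ (y, x) ∈ W ∧ x ≠ y) ∧
      ∃ z, ((x, z) ∈ W ∧ (z, x) ∈ W ∧ x ≠ z) ∧ ((z, y) ∈ W ∧ (y, z) ∈ W ∧ z ≠ y) := by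
  simp only [termT, rint, Set.mem_inter_iff, Set.mem_ofPred_eq, mem_rint_div]
  aesop

theorem exists_triangle_of_mem_rint_termT {x y : U} (h : (x, y) ∈ rint W v termT) :
    ∃ t : ZMod 3 → U, t 0 = x ∧ t 1 = y ∧ IsTriangle W t := by
  obtain ⟨⟨hxy, hyx, hne⟩, z, ⟨hxz, hzx, hxz'⟩, ⟨hzy, hyz, hzy'⟩⟩ := mem_rint_termT.1 h
  refine ⟨![x, y, z], rfl, rfl, fun a b hab => ?_⟩
  fin_cases a <;> fin_cases b <;> first | exact absurd rfl hab | simp_all [eq_comm]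

theorem IsTriangle.exists_ne_ne (ht : IsTriangle W t) (u w : U) : ∃ e, e ≠ u ∧ e ≠ w := by
  classical
  have hinj : Function.Injective t := fun a b hab => by_contra fun hne => (ht a b hne).1 hab
  have hcard : ({u, w} : Finset U).card < (Finset.univ.image t).card := by
    rw [Finset.card_image_of_injective _ hinj]
    exact (Finset.card_le_two).trans_lt (by decide)
  obtain ⟨e, -, he⟩ := Finset.exists_mem_notMem_of_card_lt_card hcard
  simp only [Finset.mem_insert, Finset.mem_singleton, not_or] at he
  exact ⟨e, he⟩

theorem IsTriangle.mem_gridUnit (ht : IsTriangle W t)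
    {a b i j : ℕ} (hab : a % 3 ≠ b % 3) (hij : i ≤ j + 1) (hji : j ≤ i + 1) :
    ((t a, i), (t b, j)) ∈ gridUnit W :=
  have h := ht a b (mt (ZMod.natCast_eq_natCast_iff' a b 3).1 hab)
  ⟨shaped_of_ne h.1 hij hji, h.2⟩

end Triangle

theorem termT_not_valid_zero (m : ℕ) (H : Set RS) : ¬ Valid H (termT : RTerm m) .zero := by
  intro h
  have hT : ((0 : Fin 3), (1 : Fin 3)) ∈ rint Set.univ (fun _ => ∅) (termT : RTerm m) :=
    mem_rint_termT.2 ⟨by simp, 2, by simp, by simp⟩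
  rw [h (Fin 3) Set.univ (fun _ => ∅) ⟨fun _ _ _ _ => ⟨trivial, trivial⟩, fun _ _ _ _ => trivial⟩
    (fun _ => Set.empty_subset _)] at hT
  exact hT

section Climb

variable {m : ℕ} {U : Type*} {W : Set (U × U)} {v : Fin m → Set ((U × ℕ) × (U × ℕ))} {D : ℕ}
  {t : ZMod 3 → U}

/-- Each step lifts the lower endpoint to the next level, cycling through the triangle so that
the two endpoints stay distinct. -/
def climb (t : ZMod 3 → U) (s : ℕ) : (U × ℕ) × (U × ℕ) :=
  ((t (s / 2 : ℕ), s / 2), (t ((s + 1) / 2 + 1 : ℕ), (s + 1) / 2))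

theorem climb_mem (ht : IsTriangle W t) (s : ℕ) : climb t s ∈ gridUnit W :=
  ht.mem_gridUnit (by omega) (by omega) (by omega)

theorem climb_step (ht : IsTriangle W t) (s : ℕ) :
    Step (gridUnit W) (climb t s) (climb t (s + 1)) := by
  obtain ⟨g, rfl | rfl⟩ := Nat.even_or_odd' s
  · have h : (2 * g + 1) / 2 = 2 * g / 2 := by omega
    exact Or.inl ⟨by simp only [climb, h], ht.mem_gridUnit (by omega) (by omega) (by omega)⟩
  · have h : (2 * g + 1 + 1 + 1) / 2 = (2 * g + 1 + 1) / 2 := by omega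
    exact Or.inr (Or.inl ⟨ht.mem_gridUnit (by omega) (by omega) (by omega),
      by simp only [climb, h]⟩)

theorem notMem_rint_alwaysFor_neg_gridFill (ht : IsTriangle W t) {b : RTerm m}
    (hb : ∀ p, Shaped p → D ≤ min p.1.2 p.2.2 → p ∈ rint (gridFill W D) v b) (r : ℕ) :
    ((t 0, 0), (t 1, 0)) ∉
      rint (gridFill W D) v (alwaysFor (.neg (alwaysFor b r)) (2 * (D + r))) := by
  intro h
  have hend := mem_rint_alwaysFor_of_walk (X := gridFill W D) (fun k => Or.inl (climb_mem ht k))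
    (fun k => (climb_step ht k).mono Set.subset_union_left) (2 * (D + r)) 0
    (by simpa [climb] using h)
  exact hend.2 (mem_rint_alwaysFor_gridFill hb r _ (Shaped.of_mem_gridFill hend.1)
    (by simp only [climb]; omega))

end Climb

section HRel

variable {H : Set RS} {P : Type*} {X Y : Set (P × P)}

theorem IsHRel.union (hX : IsHRel H X) (hY : IsHRel H Y) : IsHRel H (X ∪ Y) :=
  ⟨fun hR a b h => h.elim (fun h => (hX.1 hR a b h).imp Or.inl Or.inl)
      (fun h => (hY.1 hR a b h).imp Or.inr Or.inr),
    fun hS a b h => h.elim (fun h => Or.inl (hX.2 hS a b h)) (fun h => Or.inr (hY.2 hS a b h))⟩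

theorem IsHRel.sdiff (hX : IsHRel H X) (hloop : RS.R ∈ H → ∀ a, (a, a) ∉ Y)
    (hsymm : ∀ a b, (a, b) ∈ Y → (b, a) ∈ Y) : IsHRel H (X \ Y) :=
  ⟨fun hR a b h => ⟨⟨(hX.1 hR a b h.1).1, hloop hR a⟩, ⟨(hX.1 hR a b h.1).2, hloop hR b⟩⟩,
    fun hS a b h => ⟨hX.2 hS a b h.1, fun h' => h.2 (hsymm b a h')⟩⟩

variable {U : Type*} {W : Set (U × U)} {D : ℕ}

theorem isHRel_gridUnit (hW : IsHRel H W) : IsHRel H (gridUnit W) :=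
  ⟨fun hR a b h => ⟨⟨shaped_self a, (hW.1 hR _ _ h.2).1⟩, ⟨shaped_self b, (hW.1 hR _ _ h.2).2⟩⟩,
    fun hS _ _ h => ⟨Shaped.swap h.1, hW.2 hS _ _ h.2⟩⟩

theorem isHRel_gridFill (hW : IsHRel H W) : IsHRel H (gridFill W D) := by
  refine (isHRel_gridUnit hW).union
    ⟨fun _ a b ⟨_, hD⟩ => ?_, fun _ a b ⟨hs, hD⟩ => ⟨hs.swap, ?_⟩⟩
  · obtain ⟨ha, hb⟩ := le_min_iff.1 hD
    exact ⟨⟨shaped_self a, le_min ha ha⟩, ⟨shaped_self b, le_min hb hb⟩⟩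
  · exact hD.trans_eq (min_comm _ _)

theorem isHRel_gridDropFlat (hW : IsHRel H W) : IsHRel H (gridDropFlat W D) :=
  (isHRel_gridUnit hW).sdiff (fun _ _ h => h.2.2 rfl)
    fun _ _ ⟨h1, h2, h3⟩ => ⟨h1.symm, (le_of_le_of_eq h2 h1 :), Ne.symm h3⟩

theorem isHRel_gridDropLoops (hW : IsHRel H W) (hR : RS.R ∉ H) :
    IsHRel H (gridDropLoops W D) :=
  (isHRel_gridUnit hW).sdiff (fun h => absurd h hR) fun _ _ ⟨h1, h2⟩ =>
    ⟨h1.symm, (le_of_le_of_eq h2 (congrArg Prod.snd h1) :)⟩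

end HRel

theorem not_isAtomT_of_separated {m : ℕ} {H : Set RS} {σ : RTerm m} (ρ : RTerm m)
    {P Q : Type} {X : Set (P × P)} {vX : Fin m → Set (P × P)} {Y : Set (Q × Q)}
    {vY : Fin m → Set (Q × Q)} (hX : IsHRel H X) (hvX : ∀ i, vX i ⊆ X) (hY : IsHRel H Y)
    (hvY : ∀ i, vY i ⊆ Y) {p : P × P} (hp : p ∈ rint X vX σ) (hpρ : p ∉ rint X vX ρ)
    {q : Q × Q} (hq : q ∈ rint Y vY σ) (hqρ : q ∈ rint Y vY ρ) : ¬ IsAtomT H σ := by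
  rintro ⟨-, hσ⟩
  rcases hσ ρ with h | h
  · have hq' : q ∈ rint Y vY (σ.mul ρ) := ⟨hq, hqρ⟩
    rw [h Q Y vY hY hvY] at hq'
    exact hq'
  · have hp' : p ∈ rint X vX (σ.mul ρ.neg) := ⟨hp, rint_subset hvX σ hp, hpρ⟩
    rw [h P X vX hX hvX] at hp'
    exact hp'

/-- The separating term says that no pair where `b` survives `r` more steps is reachable within
`2 (D + r)` steps: false at the root of `gridFill W D`, true at the root of `K`, where `b` dies. -/
theorem not_isAtomT_of_triangle {m : ℕ} {H : Set RS} {U : Type} {W : Set (U × U)}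
    {v : Fin m → Set (U × U)} (hW : IsHRel H W) (hv : ∀ i, v i ⊆ W) {t : ZMod 3 → U}
    (ht : IsTriangle W t) {σ : RTerm m}
    (hσ : (t 0, t 1) ∈ rint W v σ) {D : ℕ} (hD : σ.depth < D) {b : RTerm m} {r : ℕ}
    (hb : ∀ p, Shaped p → D ≤ min p.1.2 p.2.2 →
      p ∈ rint (gridFill W D) (fun i => gridVal W v i ∩ gridFill W D) b)
    {K : Set ((U × ℕ) × (U × ℕ))} (hK : IsHRel H K) (hKs : ∀ p ∈ K, Shaped p)
    (hKW : ∀ p : (U × ℕ) × (U × ℕ), max p.1.2 p.2.2 < D → (p ∈ K ↔ p ∈ gridUnit W))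
    (hKb : rint K (fun i => gridVal W v i ∩ K) (alwaysFor b r) = ∅) : ¬ IsAtomT H σ := by
  have hKσ := mem_rint_of_agree_gridUnit hKs hKW hv hD hσ
  have hKρ : K ⊆ rint K (fun i => gridVal W v i ∩ K) (.neg (alwaysFor b r)) :=
    fun p hp => ⟨hp, by rw [hKb]; exact Set.notMem_empty p⟩
  refine not_isAtomT_of_separated (alwaysFor (.neg (alwaysFor b r)) (2 * (D + r)))
    (isHRel_gridFill hW) (fun _ => Set.inter_subset_right) hK (fun _ => Set.inter_subset_right)
    (mem_rint_of_agree_gridUnit (fun _ => Shaped.of_mem_gridFill)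
      (fun _ => mem_gridFill_iff_of_lt) hv hD hσ)
    (notMem_rint_alwaysFor_neg_gridFill ht hb r) hKσ
    (subset_rint_alwaysFor hKρ _ (rint_subset (fun _ => Set.inter_subset_right) σ hKσ))

theorem exists_mem_rint_of_not_valid_zero {m : ℕ} {H : Set RS} {σ : RTerm m}
    (h : ¬ Valid H σ .zero) : ∃ (U : Type) (W : Set (U × U)) (v : Fin m → Set (U × U)),
      IsHRel H W ∧ (∀ i, v i ⊆ W) ∧ (rint W v σ).Nonempty := by
  simp only [Valid, not_forall] at h
  obtain ⟨U, W, v, hW, hv, hne⟩ := h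
  exact ⟨U, W, v, hW, hv, Set.nonempty_iff_ne_empty.2 hne⟩

theorem stmt_13_general (m : ℕ) (H : Set RS) :
    ∃ τ : RTerm m, ¬ Valid H τ .zero ∧
      ∀ σ : RTerm m, IsAtomT H σ → ¬ Valid H (σ.mul τ) σ := by
  refine ⟨termT, termT_not_valid_zero m H, fun σ hσ hle => ?_⟩
  obtain ⟨U, W, v, hW, hv, ⟨x, y⟩, hxy⟩ := exists_mem_rint_of_not_valid_zero hσ.1
  have hT : (x, y) ∈ rint W v termT := ((hle U W v hW hv).symm ▸ hxy : _).2
  obtain ⟨t, rfl, rfl, ht⟩ := exists_triangle_of_mem_rint_termT hT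
  have hD : σ.depth < σ.depth + 1 := Nat.lt_succ_self _
  by_cases hR : RS.R ∈ H
  · exact not_isAtomT_of_triangle (b := divdiv) hW hv ht hxy hD
      (fun _ hp hdeep => mem_rint_divdiv_gridFill ht.exists_ne_ne hp hdeep)
      (isHRel_gridDropFlat hW) (fun _ hp => hp.1.1) (fun _ => mem_gridDropFlat_iff_of_lt)
      (rint_alwaysFor_divdiv_gridDropFlat (hW.1 hR)) hσ
  · exact not_isAtomT_of_triangle (b := .mul targetLoop divdiv) hW hv ht hxy hD
      (fun _ hp hdeep => ⟨mem_rint_targetLoop_gridFill hp hdeep,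
        mem_rint_divdiv_gridFill ht.exists_ne_ne hp hdeep⟩)
      (isHRel_gridDropLoops hW hR) (fun _ hp => hp.1.1) (fun _ => mem_gridDropLoops_iff_of_lt)
      rint_alwaysFor_targetLoop_divdiv_gridDropLoops hσ

/-- if `m ≠ 0` or `H ≠ {R,S}`, then `Fr_m(RRA_H)` is not atomic:
some nonzero `[τ]` has no atom below it. -/
theorem stmt_13 (m : ℕ) (H : Set RS) (h : m ≠ 0 ∨ H ≠ {RS.R, RS.S}) :
    ∃ τ : RTerm m, ¬ Valid H τ .zero ∧
      ∀ σ : RTerm m, IsAtomT H σ → ¬ Valid H (σ.mul τ) σ :=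
  stmt_13_general m H
end
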